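/- arXiv:1011.5996 — 3 statements merged into one kernel-verified Lean document; each statement's English description precedes it below -/
import Mathlib

section
/- Let z = (z1, z2) : ℝ → ℝ² be a smooth curve with z1, z2 odd, ∂z1(0) = 0, z(β) ≠ 0 for β ≠ 0, and suitable decay so that all integrals converge. Define (∂v1)(0) = ∫_ℝ [(∂z1(β))² + z1(β)∂²z1(β)] / |z(β)|² dβ − 2 ∫_ℝ z1(β)∂z1(β) [z1(β)∂z1(β) − z2(β)(∂z2(0) − ∂z2(β))] / |z(β)|⁴ dβ. Then (∂v1)(0) = 4 ∂z2(0) ∫₀^∞ z1(β) z2(β) ∂z1(β) / |z(β)|⁴ dβ. -/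
open MeasureTheory Filter

/-- The derivative at `α = 0` of the horizontal component of the Muskat velocity
for an odd curve with vertical tangent at `0`. -/
theorem stmt_1 (z1 z2 : ℝ → ℝ)
    (hz1 : ContDiff ℝ (⊤ : ℕ∞) z1) (hz2 : ContDiff ℝ (⊤ : ℕ∞) z2)
    (hodd1 : ∀ β, z1 (-β) = -z1 β) (hodd2 : ∀ β, z2 (-β) = -z2 β)
    (hd0 : deriv z1 0 = 0)
    (hnz : ∀ β : ℝ, β ≠ 0 → (z1 β, z2 β) ≠ (0, 0))
    (hI1 : Integrable (fun β =>
      ((deriv z1 β) ^ 2 + z1 β * deriv (deriv z1) β) / (z1 β ^ 2 + z2 β ^ 2)))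
    (hI2 : Integrable (fun β =>
      z1 β * deriv z1 β * (z1 β * deriv z1 β - z2 β * (deriv z2 0 - deriv z2 β))
        / (z1 β ^ 2 + z2 β ^ 2) ^ 2))
    (hI3 : IntegrableOn (fun β =>
      z1 β * z2 β * deriv z1 β / (z1 β ^ 2 + z2 β ^ 2) ^ 2) (Set.Ioi 0))
    (hb_top : Tendsto (fun β => z1 β * deriv z1 β / (z1 β ^ 2 + z2 β ^ 2)) atTop (nhds 0))
    (hb_bot : Tendsto (fun β => z1 β * deriv z1 β / (z1 β ^ 2 + z2 β ^ 2)) atBot (nhds 0))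
    (hb_zero : Tendsto (fun β => z1 β * deriv z1 β / (z1 β ^ 2 + z2 β ^ 2))
      (nhdsWithin 0 {(0 : ℝ)}ᶜ) (nhds 0)) :
    (∫ β, ((deriv z1 β) ^ 2 + z1 β * deriv (deriv z1) β) / (z1 β ^ 2 + z2 β ^ 2))
      - 2 * ∫ β, z1 β * deriv z1 β * (z1 β * deriv z1 β - z2 β * (deriv z2 0 - deriv z2 β))
            / (z1 β ^ 2 + z2 β ^ 2) ^ 2
      = 4 * deriv z2 0 * ∫ β in Set.Ioi (0 : ℝ),
          z1 β * z2 β * deriv z1 β / (z1 β ^ 2 + z2 β ^ 2) ^ 2 := by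
  classical
  set c : ℝ := deriv z2 0 with hc
  set A : ℝ → ℝ := fun β =>
    ((deriv z1 β) ^ 2 + z1 β * deriv (deriv z1) β) / (z1 β ^ 2 + z2 β ^ 2) with hA
  set B : ℝ → ℝ := fun β =>
    z1 β * deriv z1 β * (z1 β * deriv z1 β - z2 β * (c - deriv z2 β))
      / (z1 β ^ 2 + z2 β ^ 2) ^ 2 with hB
  set G : ℝ → ℝ := fun β => z1 β * z2 β * deriv z1 β / (z1 β ^ 2 + z2 β ^ 2) ^ 2 with hG
  set F : ℝ → ℝ := fun β => z1 β * deriv z1 β / (z1 β ^ 2 + z2 β ^ 2) with hF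
  set φ : ℝ → ℝ := fun β => A β - 2 * B β - 2 * c * G β with hφ
  -- basic facts
  have hz10 : z1 0 = 0 := by have := hodd1 0; simp at this; linarith
  have hF0 : F 0 = 0 := by simp [hF, hz10]
  have hDpos : ∀ x : ℝ, x ≠ 0 → 0 < z1 x ^ 2 + z2 x ^ 2 := by
    intro x hx
    rcases lt_or_eq_of_le (by positivity : (0:ℝ) ≤ z1 x ^ 2 + z2 x ^ 2) with h | h
    · exact h
    · exfalso
      have h1 : z1 x = 0 := by nlinarith [sq_nonneg (z1 x), sq_nonneg (z2 x)]
      have h2 : z2 x = 0 := by nlinarith [sq_nonneg (z1 x), sq_nonneg (z2 x)]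
      exact hnz x hx (by simp [h1, h2])
  have hz1d : Differentiable ℝ z1 := hz1.differentiable (by simp)
  have hz2d : Differentiable ℝ z2 := hz2.differentiable (by simp)
  have hdz1d : Differentiable ℝ (deriv z1) :=
    ((contDiff_infty_iff_deriv.mp (hz1.of_le (by simp))).2).differentiable
      (by simp)
  have hdz1even : ∀ x : ℝ, deriv z1 (-x) = deriv z1 x := by
    intro x
    have h1 : (fun y : ℝ => z1 (-y)) = fun y => -z1 y := funext hodd1
    have h2 := deriv_comp_neg z1 x
    rw [h1, deriv.fun_neg] at h2
    linarith
  have hGeven : ∀ x : ℝ, G (-x) = G x := by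
    intro x
    simp only [hG, hodd1, hodd2, hdz1even]
    ring_nf
  -- integrability of G on the whole line
  have hGIci : IntegrableOn G (Set.Ici 0) := Iff.mpr integrableOn_Ici_iff_integrableOn_Ioi hI3
  have h_map_neg : (volume.restrict (Set.Ici (0:ℝ))).map Neg.neg
      = volume.restrict (Set.Iic (0:ℝ)) := by
    conv => rhs; rw [← Measure.map_neg_eq_self (volume : Measure ℝ),
      measurableEmbedding_neg.restrict_map]
    simp
  have hGIic : IntegrableOn G (Set.Iic 0) := by
    rw [IntegrableOn, ← h_map_neg, measurableEmbedding_neg.integrable_map_iff]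
    have hcomp : G ∘ Neg.neg = G := funext fun x => hGeven x
    rw [hcomp]
    exact hGIci
  have hGint : Integrable G := by
    rw [← integrableOn_univ, ← Set.Iic_union_Ici_of_le (le_refl (0:ℝ)), integrableOn_union]
    exact ⟨hGIic, hGIci⟩
  -- φ is integrable
  have hφint : Integrable φ := by
    have h := (hI1.sub (hI2.const_mul 2)).sub (hGint.const_mul (2 * c))
    refine h.congr (Filter.Eventually.of_forall fun x => ?_)
    simp only [Pi.sub_apply, hφ]
  -- F has derivative φ away from 0
  have hFderiv : ∀ x : ℝ, x ≠ 0 → HasDerivAt F (φ x) x := by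
    intro x hx
    have hDne : z1 x ^ 2 + z2 x ^ 2 ≠ 0 := ne_of_gt (hDpos x hx)
    have hN : HasDerivAt (fun b => z1 b * deriv z1 b)
        (deriv z1 x * deriv z1 x + z1 x * deriv (deriv z1) x) x :=
      ((hz1d x).hasDerivAt).mul ((hdz1d x).hasDerivAt)
    have hD : HasDerivAt (fun b => z1 b ^ 2 + z2 b ^ 2)
        (2 * z1 x * deriv z1 x + 2 * z2 x * deriv z2 x) x := by
      have h := (((hz1d x).hasDerivAt).fun_pow 2).fun_add (((hz2d x).hasDerivAt).fun_pow 2)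
      refine h.congr_deriv ?_
      push_cast
      ring
    have h := hN.div hD hDne
    have heq : φ x = ((deriv z1 x * deriv z1 x + z1 x * deriv (deriv z1) x)
          * (z1 x ^ 2 + z2 x ^ 2)
        - z1 x * deriv z1 x * (2 * z1 x * deriv z1 x + 2 * z2 x * deriv z2 x))
        / (z1 x ^ 2 + z2 x ^ 2) ^ 2 := by
      simp only [hφ, hA, hB, hG]
      field_simp
      ring
    rw [heq]
    exact h
  -- continuity of F within Iic 0 and Ici 0 at 0
  have hFzero_Iio : Tendsto F (nhdsWithin 0 (Set.Iio 0)) (nhds 0) :=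
    hb_zero.mono_left (nhdsWithin_mono 0 (fun x hx => ne_of_lt hx))
  have hFzero_Ioi : Tendsto F (nhdsWithin 0 (Set.Ioi 0)) (nhds 0) :=
    hb_zero.mono_left (nhdsWithin_mono 0 (fun x hx => ne_of_gt hx))
  have hcont_Iic : ContinuousWithinAt F (Set.Iic 0) 0 := by
    rw [ContinuousWithinAt, hF0, ← Set.Iio_insert, nhdsWithin_insert, Filter.tendsto_sup]
    exact ⟨by simpa [hF0] using tendsto_pure_nhds F 0, hFzero_Iio⟩
  have hcont_Ici : ContinuousWithinAt F (Set.Ici 0) 0 := by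
    rw [ContinuousWithinAt, hF0, ← Set.Ioi_insert, nhdsWithin_insert, Filter.tendsto_sup]
    exact ⟨by simpa [hF0] using tendsto_pure_nhds F 0, hFzero_Ioi⟩
  -- FTC on both half lines
  have hIic : ∫ x in Set.Iic (0:ℝ), φ x = F 0 - 0 :=
    integral_Iic_of_hasDerivAt_of_tendsto hcont_Iic
      (fun x hx => hFderiv x (ne_of_lt hx)) (hφint.integrableOn) hb_bot
  have hIoi : ∫ x in Set.Ioi (0:ℝ), φ x = 0 - F 0 :=
    integral_Ioi_of_hasDerivAt_of_tendsto hcont_Ici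
      (fun x hx => hFderiv x (ne_of_gt hx)) (hφint.integrableOn) hb_top
  have hφzero : ∫ x, φ x = 0 := by
    rw [← intervalIntegral.integral_Iic_add_Ioi hφint.integrableOn hφint.integrableOn, hIic, hIoi]
    ring
  -- symmetry of G integral
  have hGIic_eq : ∫ x in Set.Iic (0:ℝ), G x = ∫ x in Set.Ioi (0:ℝ), G x := by
    have h1 : ∫ x in Set.Iic (0:ℝ), G x = ∫ x in Set.Iic (0:ℝ), G (-x) :=
      setIntegral_congr_fun measurableSet_Iic (fun x _ => (hGeven x).symm)
    rw [h1, integral_comp_neg_Iic, neg_zero]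
  have hGfull : ∫ x, G x = 2 * ∫ x in Set.Ioi (0:ℝ), G x := by
    rw [← intervalIntegral.integral_Iic_add_Ioi hGIic hI3, hGIic_eq]
    ring
  -- assemble
  show (∫ β, A β) - 2 * ∫ β, B β = 4 * c * ∫ β in Set.Ioi (0:ℝ), G β
  have step1 : (∫ β, A β) - 2 * ∫ β, B β = ∫ β, (A β - 2 * B β) := by
    rw [integral_sub hI1 (hI2.const_mul 2), integral_const_mul]
  have step2 : (∫ β, (A β - 2 * B β)) = ∫ β, (φ β + 2 * c * G β) := by
    congr 1
    funext β
    simp only [hφ]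
    ring
  rw [step1, step2, integral_add hφint (hGint.const_mul (2 * c)), hφzero,
    integral_const_mul, hGfull]
  ring
end

section
/- Let z⁰ : ℝ → ℝ² and suppose |z⁰(α) − z⁰(α−β)|² ≥ β²/R₀² for all α, β (arc-chord lower bound with constant R₀ > 0). Let z(·,t) satisfy |(z(α,t) − z(α−β,t)) − (z⁰(α) − z⁰(α−β))| ≤ C_R |β| t for all α, β and t ≥ 0. Then for any R > R₀ and all 0 ≤ t < T_A := (R₀^{-2} − R^{-2}) / (C_R² + 2 C_R / R₀), with additionally t ≤ 1, one has |z(α,t) − z(α−β,t)|² > β²/R² for all α, β ≠ 0. -/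
/-- Squared Euclidean norm on `ℝ²`. -/
def nsq (p : ℝ × ℝ) : ℝ := p.1 ^ 2 + p.2 ^ 2

lemma sqrt_nsq_eq (p : ℝ × ℝ) : Real.sqrt (nsq p) = ‖(⟨p.1, p.2⟩ : ℂ)‖ := by
  rw [Complex.norm_def, Complex.normSq_mk, nsq]
  ring_nf

lemma nsq_nonneg (p : ℝ × ℝ) : 0 ≤ nsq p := by unfold nsq; positivity

/-- Persistence of the arc-chord condition: if `z⁰` has arc-chord constant `R₀` and the
evolution moves differences at speed at most `C_R |β|`, then for `t < T_A` (and `t ≤ 1`)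
the arc-chord condition holds with any constant `R > R₀`. -/
theorem stmt_10 (z0 : ℝ → ℝ × ℝ) (z : ℝ → ℝ → ℝ × ℝ) (R0 CR R : ℝ)
    (hR0 : 0 < R0) (hCR : 0 < CR) (hR : R0 < R)
    (harc : ∀ α β : ℝ, β ^ 2 / R0 ^ 2 ≤ nsq (z0 α - z0 (α - β)))
    (hlip : ∀ (α β t : ℝ), 0 ≤ t →
      Real.sqrt (nsq ((z α t - z (α - β) t) - (z0 α - z0 (α - β)))) ≤ CR * |β| * t) :
    ∀ t : ℝ, 0 ≤ t → t ≤ 1 →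
      t < (R0 ^ (-2 : ℤ) - R ^ (-2 : ℤ)) / (CR ^ 2 + 2 * CR / R0) →
      ∀ α β : ℝ, β ≠ 0 → β ^ 2 / R ^ 2 < nsq (z α t - z (α - β) t) := by
  intro t ht ht1 hTA α β hβ
  have hRpos : 0 < R := hR0.trans hR
  have hden : 0 < CR ^ 2 + 2 * CR / R0 := by positivity
  have hT : t * (CR ^ 2 + 2 * CR / R0) < R0 ^ (-2 : ℤ) - R ^ (-2 : ℤ) :=
    (lt_div_iff₀ hden).mp hTA
  have hT' : t * (CR ^ 2 + 2 * CR * R0⁻¹) < (R0⁻¹) ^ 2 - (R⁻¹) ^ 2 := by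
    have e1 : R0 ^ (-2 : ℤ) = (R0⁻¹) ^ 2 := by
      rw [zpow_neg, zpow_two, mul_inv, sq]
    have e2 : R ^ (-2 : ℤ) = (R⁻¹) ^ 2 := by
      rw [zpow_neg, zpow_two, mul_inv, sq]
    rw [e1, e2] at hT
    rw [show 2 * CR * R0⁻¹ = 2 * CR / R0 by rw [div_eq_mul_inv]]
    exact hT
  have hR0i : 0 < R0⁻¹ := inv_pos.mpr hR0
  have hRi : 0 < R⁻¹ := inv_pos.mpr hRpos
  have hc : 0 ≤ R0⁻¹ - CR * t := by
    by_contra h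
    push_neg at h
    nlinarith [sq_nonneg (R⁻¹), mul_nonneg (sq_nonneg CR) ht,
      mul_pos (sub_pos.mpr (by linarith : R0⁻¹ < CR * t)) hR0i]
  set d := z α t - z (α - β) t with hd
  set d0 := z0 α - z0 (α - β) with hd0
  have h0 : |β| * R0⁻¹ ≤ Real.sqrt (nsq d0) := by
    have h1 : Real.sqrt (β ^ 2 / R0 ^ 2) ≤ Real.sqrt (nsq d0) := Real.sqrt_le_sqrt (harc α β)
    rwa [show β ^ 2 / R0 ^ 2 = (β * R0⁻¹) ^ 2 by field_simp,
      Real.sqrt_sq_eq_abs, abs_mul, abs_of_pos hR0i] at h1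
  have htri : Real.sqrt (nsq d0) ≤ Real.sqrt (nsq d) + Real.sqrt (nsq (d - d0)) := by
    rw [sqrt_nsq_eq, sqrt_nsq_eq, sqrt_nsq_eq]
    have heq : (⟨d0.1, d0.2⟩ : ℂ) = ⟨d.1, d.2⟩ - ⟨(d - d0).1, (d - d0).2⟩ := by
      simp [Complex.ext_iff, Prod.sub_def]
    rw [heq]
    exact norm_sub_le (⟨d.1, d.2⟩ : ℂ) ⟨(d - d0).1, (d - d0).2⟩
  have hlb : |β| * (R0⁻¹ - CR * t) ≤ Real.sqrt (nsq d) := by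
    have h2 := hlip α β t ht
    have : |β| * (R0⁻¹ - CR * t) = |β| * R0⁻¹ - CR * |β| * t := by ring
    rw [this]
    linarith
  have hnn : 0 ≤ |β| * (R0⁻¹ - CR * t) := mul_nonneg (abs_nonneg β) hc
  have hsq : (|β| * (R0⁻¹ - CR * t)) ^ 2 ≤ nsq d := by
    nlinarith [Real.sq_sqrt (nsq_nonneg d), Real.sqrt_nonneg (nsq d)]
  have hb2 : (0:ℝ) < β ^ 2 := by positivity
  have hkey : (R⁻¹) ^ 2 < (R0⁻¹ - CR * t) ^ 2 := by
    nlinarith [mul_nonneg (sq_nonneg CR) ht, sq_nonneg (CR * t),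
      mul_nonneg (mul_nonneg (sq_nonneg CR) ht) (sub_nonneg.mpr ht1)]
  have hscalar : β ^ 2 / R ^ 2 < (|β| * (R0⁻¹ - CR * t)) ^ 2 := by
    rw [mul_pow, sq_abs, div_eq_mul_inv, ← inv_pow]
    exact (mul_lt_mul_iff_right₀ hb2).mpr hkey
  linarith
end

section
/- Let σ : ℝ × [0,τ] → ℝ be C³ in (x,t) with all derivatives up to order 3 bounded by a constant C₀, 2π-periodic in x, and satisfying σ(0,0) = 0, ∂_x σ(0,0) = 0, ∂_x² σ(0,0) = −c₂ < 0, ∂_t σ(0,0) = c₁ > 0. Define ħ(x,t) = (1/4)(A^{-1}τ² + A^{-1} sin(x/2)) + A^{-2}τ t + A t sin(x/2). Then there exist A₀ and, for each A ≥ A₀, a τ₀(A) > 0 such that for all 0 < τ ≤ τ₀(A): σ(x,t) + ∂_t ħ(x,t) − A^{1/2} ħ(x,t) ≥ (1/2) A^{-2} τ for all x ∈ [0,π] and t ∈ [0, τ²]. -/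
/-!
As `σ(0,0) = 0` and `‖Dσ‖ ≤ C₀`, `σ(x,t) ≥ -C₀(x + t)`. Jordan's inequality
`x ≤ π sin(x/2)` on `[0,π]` lets the term `A sin(x/2)` of `∂_t ħ` absorb `C₀ x` once
`A ≥ C₀π + 2`; for `τ ≤ ((4C₀+1)A²)⁻¹` the constraint `t ≤ τ²` makes all remaining terms
small against `A⁻²τ`.
-/

open Real Set

theorem norm_fderiv_le_of_norm_iteratedFDeriv_one_le {E F : Type*} [NormedAddCommGroup E]
    [NormedSpace ℝ E] [NormedAddCommGroup F] [NormedSpace ℝ F] {f : E → F} {C : ℝ} {p : E}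
    (h : ‖iteratedFDeriv ℝ 1 f p‖ ≤ C) : ‖fderiv ℝ f p‖ ≤ C := by
  rwa [← norm_iteratedFDeriv_zero (𝕜 := ℝ) (f := fderiv ℝ f), norm_iteratedFDeriv_fderiv]

theorem norm_sub_le_of_norm_iteratedFDeriv_one_le {E F : Type*} [NormedAddCommGroup E]
    [NormedSpace ℝ E] [NormedAddCommGroup F] [NormedSpace ℝ F] {f : E → F} {C : ℝ}
    (hf : Differentiable ℝ f) (hC : ∀ p, ‖iteratedFDeriv ℝ 1 f p‖ ≤ C) (p q : E) :
    ‖f q - f p‖ ≤ C * ‖q - p‖ :=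
  convex_univ.norm_image_sub_le_of_norm_fderiv_le (fun p _ => hf p)
    (fun p _ => norm_fderiv_le_of_norm_iteratedFDeriv_one_le (hC p)) (mem_univ p) (mem_univ q)

theorem abs_sub_le_of_norm_iteratedFDeriv_one_le {σ : ℝ → ℝ → ℝ} {C : ℝ}
    (hσ : Differentiable ℝ (fun p : ℝ × ℝ => σ p.1 p.2))
    (hC : ∀ p, ‖iteratedFDeriv ℝ 1 (fun q : ℝ × ℝ => σ q.1 q.2) p‖ ≤ C) (x t : ℝ) :
    |σ x t - σ 0 0| ≤ C * (|x| + |t|) := by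
  have hC0 : 0 ≤ C := (norm_nonneg _).trans (hC 0)
  calc |σ x t - σ 0 0| ≤ C * ‖((x, t) : ℝ × ℝ) - (0, 0)‖ :=
        norm_sub_le_of_norm_iteratedFDeriv_one_le hσ hC (0, 0) (x, t)
    _ ≤ C * (|x| + |t|) := by
        gcongr
        simp only [Prod.mk_sub_mk, sub_zero, Prod.norm_mk, Real.norm_eq_abs]
        exact max_le (le_add_of_nonneg_right (abs_nonneg t)) (le_add_of_nonneg_left (abs_nonneg x))

theorem le_pi_mul_sin_half {x : ℝ} (hx₀ : 0 ≤ x) (hxπ : x ≤ π) : x ≤ π * sin (x / 2) := by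
  have h := mul_le_sin (x := x / 2) (by linarith) (by linarith)
  rw [div_mul_div_comm, mul_comm 2 x, mul_div_mul_right _ _ two_ne_zero, div_le_iff₀' pi_pos] at h
  exact h

theorem half_inv_sq_mul_le_of_lipschitz_lower_bound {C A r s τ x t v : ℝ} (hC : 0 ≤ C)
    (hA : C * π + 2 ≤ A) (hr : 0 ≤ r) (hrA : r ≤ A) (hs : 0 ≤ s) (hxs : x ≤ π * s) (hτ : 0 < τ)
    (hτ₀ : τ ≤ ((4 * C + 1) * A ^ 2)⁻¹) (ht : 0 ≤ t) (htτ : t ≤ τ ^ 2)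
    (hv : -(C * (x + t)) ≤ v) :
    (1 / 2) * (A ^ 2)⁻¹ * τ ≤
      v + ((A ^ 2)⁻¹ * τ + A * s)
        - r * ((1 / 4) * (A⁻¹ * τ ^ 2 + A⁻¹ * s) + (A ^ 2)⁻¹ * τ * t + A * t * s) := by
  have hA2 : 2 ≤ A := by nlinarith [pi_pos]
  have hKτ : (4 * C + 1) * A ^ 2 * τ ≤ 1 := (le_inv_mul_iff₀ (by positivity)).mp (by rwa [mul_one])
  have hA2τ : A ^ 2 * τ ≤ 1 := by nlinarith [mul_nonneg hC (by positivity : 0 ≤ A ^ 2 * τ)]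
  have hτ_le : τ ≤ 1 / 4 := by
    nlinarith [mul_le_mul_of_nonneg_right (by nlinarith : 4 ≤ A ^ 2) hτ.le]
  have hrAt : r * A * t ≤ 1 / 4 := by
    nlinarith [mul_le_mul hrA htτ ht (by linarith : (0 : ℝ) ≤ A),
      mul_le_mul_of_nonneg_left hA2τ hτ.le]
  have hrt : r * t ≤ 1 / 4 := by nlinarith [mul_nonneg hr ht]
  set q := A⁻¹ with hq
  have hAq : A * q = 1 := mul_inv_cancel₀ (by linarith)
  have hq2 : (A ^ 2)⁻¹ = q ^ 2 := by rw [hq, inv_pow]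
  have hrq : r * q ≤ 1 := by nlinarith [inv_pos.mpr (by linarith : (0 : ℝ) < A)]
  have hx_term : C * x ≤ s * (A - (1 / 4) * (r * q) - r * A * t) := by
    have hcoeff : C * π ≤ A - (1 / 4) * (r * q) - r * A * t := by linarith
    nlinarith [mul_le_mul_of_nonneg_left hxs hC, mul_le_mul_of_nonneg_left hcoeff hs]
  have hτ_term : (3 / 4) * (q ^ 2 * τ) ≤ q ^ 2 * τ * (1 - r * t) := by
    nlinarith [mul_le_mul_of_nonneg_left hrt (by positivity : 0 ≤ q ^ 2 * τ)]
  have ht_term : C * t + (1 / 4) * (r * q) * τ ^ 2 ≤ (1 / 4) * (q ^ 2 * τ) := by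
    have hτ2 : (4 * C + 1) * τ ^ 2 ≤ q ^ 2 * τ := by
      have := mul_le_mul_of_nonneg_left hKτ (by positivity : 0 ≤ q ^ 2 * τ)
      linear_combination this - ((4 * C + 1) * τ ^ 2 * (1 + A * q)) * hAq
    nlinarith [mul_le_mul_of_nonneg_left htτ hC, mul_le_mul_of_nonneg_right hrq (sq_nonneg τ)]
  -- the right side is `v + s (A - rq/4 - rAt) + q²τ (1 - rt) - rqτ²/4` with `q = A⁻¹`
  rw [hq2]
  linear_combination hv + hx_term + hτ_term + ht_term

theorem stmt_13_general (σ : ℝ → ℝ → ℝ) (C0 : ℝ)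
    (hσ : ContDiff ℝ 3 (fun p : ℝ × ℝ => σ p.1 p.2))
    (hbound : ∀ (i : ℕ), i ≤ 3 → ∀ p : ℝ × ℝ,
      ‖iteratedFDeriv ℝ i (fun q : ℝ × ℝ => σ q.1 q.2) p‖ ≤ C0)
    (h00 : σ 0 0 = 0) :
    ∃ A0 : ℝ, ∀ A : ℝ, A0 ≤ A → ∃ τ0 > 0, ∀ τ : ℝ, 0 < τ → τ ≤ τ0 →
      ∀ x ∈ Set.Icc (0 : ℝ) Real.pi, ∀ t ∈ Set.Icc (0 : ℝ) (τ ^ 2),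
        (1 / 2) * (A ^ 2)⁻¹ * τ ≤
          σ x t + ((A ^ 2)⁻¹ * τ + A * Real.sin (x / 2))
            - Real.sqrt A *
              ((1 / 4) * (A⁻¹ * τ ^ 2 + A⁻¹ * Real.sin (x / 2)) + (A ^ 2)⁻¹ * τ * t
                + A * t * Real.sin (x / 2)) := by
  have hC0 : 0 ≤ C0 := (norm_nonneg _).trans (hbound 0 (by norm_num) 0)
  refine ⟨C0 * π + 2, fun A hA => ?_⟩
  have hA1 : 1 ≤ A := by nlinarith [pi_pos]
  refine ⟨((4 * C0 + 1) * A ^ 2)⁻¹, by positivity, ?_⟩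
  rintro τ hτ hτ₀ x ⟨hx₀, hxπ⟩ t ⟨ht, htτ⟩
  have hσ_lower : -(C0 * (x + t)) ≤ σ x t := by
    have h := abs_sub_le_of_norm_iteratedFDeriv_one_le (hσ.differentiable (by norm_num))
      (hbound 1 (by norm_num)) x t
    rw [h00, sub_zero, abs_of_nonneg hx₀, abs_of_nonneg ht] at h
    exact neg_le_of_abs_le h
  exact half_inv_sq_mul_le_of_lipschitz_lower_bound hC0 hA (Real.sqrt_nonneg A)
    (Real.sqrt_le_self_iff.mpr (Or.inr hA1))
    (sin_nonneg_of_nonneg_of_le_pi (by linarith) (by linarith)) (le_pi_mul_sin_half hx₀ hxπ)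
    hτ hτ₀ ht htτ hσ_lower

/-- The key inequality `(ħ)`: for a Rayleigh–Taylor function `σ` vanishing to second
order in `x` and first order in `t` at `(0,0)` (with `∂_x²σ(0,0) < 0 < ∂_tσ(0,0)`),
with the weight `ħ(x,t) = ¼(A⁻¹τ² + A⁻¹ sin(x/2)) + A⁻²τt + At sin(x/2)`, one has
`σ + ∂_t ħ − A^{1/2} ħ ≥ ½ A⁻² τ` on `[0,π] × [0,τ²]` for suitable `A`, `τ`. -/
theorem stmt_13 (σ : ℝ → ℝ → ℝ) (C0 c1 c2 : ℝ)
    (hC0 : 0 < C0) (hc1 : 0 < c1) (hc2 : 0 < c2)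
    (hσ : ContDiff ℝ 3 (fun p : ℝ × ℝ => σ p.1 p.2))
    (hbound : ∀ (i : ℕ), i ≤ 3 → ∀ p : ℝ × ℝ,
      ‖iteratedFDeriv ℝ i (fun q : ℝ × ℝ => σ q.1 q.2) p‖ ≤ C0)
    (hper : ∀ x t, σ (x + 2 * Real.pi) t = σ x t)
    (h00 : σ 0 0 = 0)
    (hx0 : deriv (fun x => σ x 0) 0 = 0)
    (hxx0 : deriv (deriv (fun x => σ x 0)) 0 = -c2)
    (ht0 : deriv (fun t => σ 0 t) 0 = c1) :
    ∃ A0 : ℝ, ∀ A : ℝ, A0 ≤ A → ∃ τ0 > 0, ∀ τ : ℝ, 0 < τ → τ ≤ τ0 →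
      ∀ x ∈ Set.Icc (0 : ℝ) Real.pi, ∀ t ∈ Set.Icc (0 : ℝ) (τ ^ 2),
        (1 / 2) * (A ^ 2)⁻¹ * τ ≤
          σ x t + ((A ^ 2)⁻¹ * τ + A * Real.sin (x / 2))
            - Real.sqrt A *
              ((1 / 4) * (A⁻¹ * τ ^ 2 + A⁻¹ * Real.sin (x / 2)) + (A ^ 2)⁻¹ * τ * t
                + A * t * Real.sin (x / 2)) :=
  stmt_13_general σ C0 hσ hbound h00
end
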